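/- Let H be a real Hilbert space and K ⊆ H a nonempty, closed, convex set whose diameter is at most D (i.e., ‖x − y‖ ≤ D for all x, y ∈ K). Let l_1, …, l_T : H → ℝ be convex functions, each differentiable, whose gradients satisfy ‖∇l_t(x)‖ ≤ G for all x ∈ K and all t. Define iterates by x_1 ∈ K and x_{t+1} = P_K(x_t − η ∇l_t(x_t)) for t = 1, …, T−1, where P_K denotes the metric projection onto K (the unique nearest point of K) and the step size is η = D/(G·√T). Then for every comparator x* ∈ K, the regret satisfies Σ_{t=1}^T l_t(x_t) − Σ_{t=1}^T l_t(x*) ≤ G·D·√T. -/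

import Mathlib

/-!
Convexity bounds each round's loss gap by `⟪∇lₜ(xₜ), xₜ - x*⟫`. Projecting onto a convex set
does not increase the distance to points of the set, so expanding `‖xₜ - η∇lₜ(xₜ) - x*‖²` gives
`2η⟪∇lₜ(xₜ), xₜ - x*⟫ ≤ ‖xₜ - x*‖² - ‖xₜ₊₁ - x*‖² + η²G²`. Summing, the distances telescope to
at most `D²`, so `2η · regret ≤ D² + η²TG²`, and the choice `η = D/(G√T)` balances both terms.
-/

open Finset
open scoped RealInnerProductSpace

theorem ConvexOn.sub_le_of_hasFDerivAt {E : Type*} [NormedAddCommGroup E] [NormedSpace ℝ E]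
    {s : Set E} {f : E → ℝ} {f' : E →L[ℝ] ℝ} {x y : E} (hf : ConvexOn ℝ s f) (hx : x ∈ s)
    (hy : y ∈ s) (hf' : HasFDerivAt f f' x) : f x - f y ≤ f' (x - y) := by
  set L : ℝ →ᵃ[ℝ] E := AffineMap.lineMap x y
  have hderiv : HasDerivAt (f ∘ L) (f' (y - x)) 0 := by
    refine HasFDerivAt.comp_hasDerivAt (0 : ℝ) ?_ AffineMap.hasDerivAt_lineMap
    simpa [L] using hf'
  have hslope := (hf.comp_affineMap L).le_slope_of_hasDerivAt (by simpa [L] using hx)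
    (by simpa [L] using hy) zero_lt_one hderiv
  simp only [slope_def_field, Function.comp_apply, L, AffineMap.lineMap_apply_zero,
    AffineMap.lineMap_apply_one, sub_zero, div_one] at hslope
  rw [map_sub] at hslope ⊢
  linarith

theorem ConvexOn.sub_le_inner_gradient {H : Type*} [NormedAddCommGroup H]
    [InnerProductSpace ℝ H] [CompleteSpace H] {s : Set H} {f : H → ℝ} {x y : H}
    (hf : ConvexOn ℝ s f) (hx : x ∈ s) (hy : y ∈ s) (hd : DifferentiableAt ℝ f x) :
    f x - f y ≤ ⟪gradient f x, x - y⟫ := by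
  simpa using hf.sub_le_of_hasFDerivAt hx hy hd.hasGradientAt.hasFDerivAt

section InnerProductSpace

variable {H : Type*} [NormedAddCommGroup H] [InnerProductSpace ℝ H]

theorem Convex.norm_sub_le_of_forall_norm_sub_le {K : Set H} (hK : Convex ℝ K) {z p c : H}
    (hp : p ∈ K) (hnear : ∀ w ∈ K, ‖z - p‖ ≤ ‖z - w‖) (hc : c ∈ K) :
    ‖p - c‖ ≤ ‖z - c‖ := by
  have : Nonempty K := ⟨⟨p, hp⟩⟩
  have hinf : ‖z - p‖ = ⨅ w : K, ‖z - w‖ :=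
    le_antisymm (le_ciInf fun w => hnear w w.2)
      (ciInf_le ⟨0, Set.forall_mem_range.2 fun _ => norm_nonneg _⟩ (⟨p, hp⟩ : K))
  have hobtuse : ⟪z - p, c - p⟫ ≤ 0 := (norm_eq_iInf_iff_real_inner_le_zero hK hp).1 hinf c hc
  have hpyth : ‖z - c‖ ^ 2 = ‖z - p‖ ^ 2 - 2 * ⟪z - p, c - p⟫ + ‖p - c‖ ^ 2 := by
    rw [← sub_add_sub_cancel z p c, norm_add_sq_real, ← neg_sub c p, inner_neg_right]
    ring
  refine (pow_le_pow_iff_left₀ (norm_nonneg _) (norm_nonneg _) two_ne_zero).1 ?_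
  nlinarith [sq_nonneg ‖z - p‖]

theorem two_mul_inner_le_of_norm_sub_le {x y c g : H} {η : ℝ}
    (h : ‖y - c‖ ≤ ‖x - η • g - c‖) :
    2 * η * ⟪g, x - c⟫ ≤ ‖x - c‖ ^ 2 - ‖y - c‖ ^ 2 + η ^ 2 * ‖g‖ ^ 2 := by
  have hexpand : ‖x - η • g - c‖ ^ 2 = ‖x - c‖ ^ 2 - 2 * η * ⟪g, x - c⟫ + η ^ 2 * ‖g‖ ^ 2 := by
    rw [sub_right_comm, norm_sub_sq_real, real_inner_smul_right, real_inner_comm, norm_smul,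
      mul_pow, Real.norm_eq_abs, sq_abs]
    ring
  nlinarith [pow_le_pow_left₀ (norm_nonneg _) h 2]

end InnerProductSpace

theorem sum_Icc_sub_le_sub_of_le {a b : ℕ → ℝ} {T : ℕ} (hT : 1 ≤ T)
    (hab : ∀ t, 1 ≤ t → t < T → a (t + 1) ≤ b t) :
    ∑ t ∈ Icc 1 T, (a t - b t) ≤ a 1 - b T := by
  induction T, hT using Nat.le_induction with
  | base => simp
  | succ T hT ih =>
    rw [sum_Icc_succ_top (by omega)]
    linarith [ih fun t ht htT => hab t ht (by omega), hab T hT (by omega)]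

section OnlineGradientDescent

variable {H : Type*} [NormedAddCommGroup H] [InnerProductSpace ℝ H] [CompleteSpace H]
  {K : Set H} {proj : H → H} {l : ℕ → H → ℝ} {x : ℕ → H} {η : ℝ} {T : ℕ}

theorem ogd_mem (hprojMem : ∀ z, proj z ∈ K) (hx1 : x 1 ∈ K)
    (hstep : ∀ t, 1 ≤ t → t < T → x (t + 1) = proj (x t - η • gradient (l t) (x t)))
    {t : ℕ} (ht : t ∈ Icc 1 T) : x t ∈ K := by
  obtain ⟨ht1, htT⟩ := mem_Icc.1 ht
  cases t with
  | zero => omega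
  | succ s =>
    rcases Nat.eq_zero_or_pos s with rfl | hs
    · exact hx1
    · rw [hstep s hs (by omega)]
      exact hprojMem _

theorem ogd_two_mul_regret_le (hK : Convex ℝ K) (hprojMem : ∀ z, proj z ∈ K)
    (hprojNear : ∀ z, ∀ c ∈ K, ‖z - proj z‖ ≤ ‖z - c‖)
    (hconv : ∀ t ∈ Icc 1 T, ConvexOn ℝ Set.univ (l t))
    (hdiff : ∀ t ∈ Icc 1 T, Differentiable ℝ (l t)) (hη : 0 ≤ η) (hT : 1 ≤ T)
    (hstep : ∀ t, 1 ≤ t → t < T → x (t + 1) = proj (x t - η • gradient (l t) (x t)))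
    {c : H} (hc : c ∈ K) :
    2 * η * ∑ t ∈ Icc 1 T, (l t (x t) - l t c)
      ≤ ‖x 1 - c‖ ^ 2 + η ^ 2 * ∑ t ∈ Icc 1 T, ‖gradient (l t) (x t)‖ ^ 2 := by
  -- `y t` is the projected step from `x t`; it is `x (t + 1)` except at the last round.
  set y : ℕ → H := fun t => proj (x t - η • gradient (l t) (x t))
  have hround : ∀ t ∈ Icc 1 T, 2 * η * (l t (x t) - l t c)
      ≤ (‖x t - c‖ ^ 2 - ‖y t - c‖ ^ 2) + η ^ 2 * ‖gradient (l t) (x t)‖ ^ 2 := fun t ht =>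
    calc 2 * η * (l t (x t) - l t c) ≤ 2 * η * ⟪gradient (l t) (x t), x t - c⟫ := by
          gcongr
          exact (hconv t ht).sub_le_inner_gradient trivial trivial (hdiff t ht _)
      _ ≤ _ := two_mul_inner_le_of_norm_sub_le
          (hK.norm_sub_le_of_forall_norm_sub_le (hprojMem _) (hprojNear _) hc)
  have htelescope : ∑ t ∈ Icc 1 T, (‖x t - c‖ ^ 2 - ‖y t - c‖ ^ 2)
      ≤ ‖x 1 - c‖ ^ 2 - ‖y T - c‖ ^ 2 :=
    sum_Icc_sub_le_sub_of_le hT fun t ht htT => by rw [hstep t ht htT]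
  rw [mul_sum, mul_sum]
  calc _ ≤ ∑ t ∈ Icc 1 T, ((‖x t - c‖ ^ 2 - ‖y t - c‖ ^ 2)
          + η ^ 2 * ‖gradient (l t) (x t)‖ ^ 2) := sum_le_sum hround
    _ ≤ _ := by
      rw [sum_add_distrib]
      linarith [sq_nonneg ‖y T - c‖]

end OnlineGradientDescent

theorem ogd_regret_constant_step_general
    {H : Type*} [NormedAddCommGroup H] [InnerProductSpace ℝ H] [CompleteSpace H]
    (K : Set H) (hKconv : Convex ℝ K)
    (D G : ℝ) (hD : 0 ≤ D) (hG : 0 < G)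
    (hdiam : ∀ x ∈ K, ∀ y ∈ K, ‖x - y‖ ≤ D)
    (T : ℕ) (hT : 0 < T)
    (l : ℕ → H → ℝ)
    (hconv : ∀ t ∈ Finset.Icc 1 T, ConvexOn ℝ Set.univ (l t))
    (hdiff : ∀ t ∈ Finset.Icc 1 T, Differentiable ℝ (l t))
    (hgrad : ∀ t ∈ Finset.Icc 1 T, ∀ x ∈ K, ‖gradient (l t) x‖ ≤ G)
    (proj : H → H)
    (hprojMem : ∀ z, proj z ∈ K)
    (hprojNear : ∀ z, ∀ c ∈ K, ‖z - proj z‖ ≤ ‖z - c‖)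
    (η : ℝ) (hη : η = D / (G * Real.sqrt T))
    (x : ℕ → H) (hx1 : x 1 ∈ K)
    (hstep : ∀ t, 1 ≤ t → t < T → x (t + 1) = proj (x t - η • gradient (l t) (x t)))
    (xstar : H) (hxstar : xstar ∈ K) :
    ∑ t ∈ Finset.Icc 1 T, l t (x t) - ∑ t ∈ Finset.Icc 1 T, l t xstar
      ≤ G * D * Real.sqrt T := by
  have hxK : ∀ t ∈ Icc 1 T, x t ∈ K := fun t ht => ogd_mem hprojMem hx1 hstep ht
  rw [← sum_sub_distrib]
  rcases hD.eq_or_lt with rfl | hDpos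
  · have hx : ∀ t ∈ Icc 1 T, x t = xstar := fun t ht =>
      norm_sub_eq_zero_iff.1 (le_antisymm (hdiam _ (hxK t ht) _ hxstar) (norm_nonneg _))
    have hzero : ∑ t ∈ Icc 1 T, (l t (x t) - l t xstar) = 0 :=
      sum_eq_zero fun t ht => by rw [hx t ht, sub_self]
    simp [hzero]
  have hsqrtT : 0 < √(T : ℝ) := Real.sqrt_pos.2 (Nat.cast_pos.2 hT)
  have hηpos : 0 < η := by rw [hη]; positivity
  have hηD : η * (G * √T) = D := by rw [hη]; field_simp
  have hx1D : ‖x 1 - xstar‖ ^ 2 ≤ D ^ 2 :=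
    pow_le_pow_left₀ (norm_nonneg _) (hdiam _ hx1 _ hxstar) 2
  have hgradT : ∑ t ∈ Icc 1 T, ‖gradient (l t) (x t)‖ ^ 2 ≤ T * G ^ 2 :=
    calc _ ≤ ∑ t ∈ Icc 1 T, G ^ 2 := sum_le_sum fun t ht =>
          pow_le_pow_left₀ (norm_nonneg _) (hgrad t ht _ (hxK t ht)) 2
      _ = T * G ^ 2 := by simp
  have hregret := ogd_two_mul_regret_le hKconv hprojMem hprojNear hconv hdiff hηpos.le hT hstep
    hxstar
  refine le_of_mul_le_mul_left ?_ (by positivity : 0 < 2 * η)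
  calc _ ≤ D ^ 2 + η ^ 2 * (T * G ^ 2) := hregret.trans (by gcongr)
    _ = 2 * η * (G * D * √T) := by
      linear_combination (η * (G * √T) - D) * hηD
        - η ^ 2 * G ^ 2 * Real.sq_sqrt (Nat.cast_nonneg T)

/-- Projected online gradient descent with constant step size `η = D / (G √T)`
over a nonempty closed convex set of diameter at most `D`, applied to convex
differentiable losses with gradients bounded by `G` on the domain, has regret
at most `G · D · √T` against any fixed comparator in the domain. -/
theorem ogd_regret_constant_step
    {H : Type*} [NormedAddCommGroup H] [InnerProductSpace ℝ H] [CompleteSpace H]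
    (K : Set H) (hKne : K.Nonempty) (hKcl : IsClosed K) (hKconv : Convex ℝ K)
    (D G : ℝ) (hD : 0 ≤ D) (hG : 0 < G)
    (hdiam : ∀ x ∈ K, ∀ y ∈ K, ‖x - y‖ ≤ D)
    (T : ℕ) (hT : 0 < T)
    (l : ℕ → H → ℝ)
    (hconv : ∀ t ∈ Finset.Icc 1 T, ConvexOn ℝ Set.univ (l t))
    (hdiff : ∀ t ∈ Finset.Icc 1 T, Differentiable ℝ (l t))
    (hgrad : ∀ t ∈ Finset.Icc 1 T, ∀ x ∈ K, ‖gradient (l t) x‖ ≤ G)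
    (proj : H → H)
    (hprojMem : ∀ z, proj z ∈ K)
    (hprojNear : ∀ z, ∀ c ∈ K, ‖z - proj z‖ ≤ ‖z - c‖)
    (η : ℝ) (hη : η = D / (G * Real.sqrt T))
    (x : ℕ → H) (hx1 : x 1 ∈ K)
    (hstep : ∀ t, 1 ≤ t → t < T → x (t + 1) = proj (x t - η • gradient (l t) (x t)))
    (xstar : H) (hxstar : xstar ∈ K) :
    ∑ t ∈ Finset.Icc 1 T, l t (x t) - ∑ t ∈ Finset.Icc 1 T, l t xstar
      ≤ G * D * Real.sqrt T :=
  ogd_regret_constant_step_general K hKconv D G hD hG hdiam T hT l hconv hdiff hgrad proj hprojMem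
    hprojNear η hη x hx1 hstep xstar hxstar
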